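/- arXiv:1610.06979 — 2 statements merged into one kernel-verified Lean document; each statement's English description precedes it below -/
import Mathlib

section
/- Let G = G[X,Y] be a connected bipartite graph with bipartition (X,Y), |X| = |Y| = n (so G has 2n vertices), and m edges, where t ≥ 1 and n ≥ 2t. If ρ_D(G) ≤ m − n² + (t+6)n − (t² + 4), then m ≥ n² − tn + t². -/
/-! Evaluating the quadratic form of `Q_D(G)` at the all-ones vector gives `N ρ_D(G) ≥ 2 Σ_u Tr(u)`,
where `N = 2n`. In a connected graph distinct non-adjacent vertices are at distance at least `2`,
so `Σ_u Tr(u) ≥ 2N(N - 1) - 2m`, whence `n ρ_D(G) ≥ 2n(4n - 2) - 2m`. Comparing with the assumed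
upper bound, `m ≤ n² - tn + t² - 1` would force `2n + 4 + 4t(n - t) ≤ 0`, impossible as `t ≤ n`. -/

open SimpleGraph Finset

/-- The transmission of a vertex: sum of distances to all other vertices. -/
noncomputable def transmission {V : Type*} [Fintype V] (G : SimpleGraph V) (u : V) : ℕ :=
  ∑ v, G.dist u v

/-- The transmission σ(G): sum of distances over all unordered pairs. -/
noncomputable def transmissionOf {V : Type*} [Fintype V] (G : SimpleGraph V) : ℝ :=
  (1 / 2) * ∑ u, ∑ v, (G.dist u v : ℝ)

/-- The distance signless Laplacian matrix Q_D(G) = Tr(G) + 𝒟(G). -/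
noncomputable def distSignlessLaplacian {V : Type*} [Fintype V] [DecidableEq V]
    (G : SimpleGraph V) : Matrix V V ℝ :=
  fun u v => (if u = v then (transmission G u : ℝ) else 0) + (G.dist u v : ℝ)

/-- `ρ` is the distance signless Laplacian spectral radius of `G`,
i.e. the largest eigenvalue of `Q_D(G)`. -/
noncomputable def IsDistSLSpectralRadius {V : Type*} [Fintype V] [DecidableEq V]
    (G : SimpleGraph V) (ρ : ℝ) : Prop :=
  IsGreatest {μ : ℝ | Module.End.HasEigenvalue (Matrix.toLin' (distSignlessLaplacian G)) μ} ρ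

/-- Join of two graphs. -/
def joinGraph {α β : Type*} (G : SimpleGraph α) (H : SimpleGraph β) : SimpleGraph (α ⊕ β) :=
  SimpleGraph.fromRel (fun x y =>
    match x, y with
    | Sum.inl a, Sum.inl b => G.Adj a b
    | Sum.inr a, Sum.inr b => H.Adj a b
    | Sum.inl _, Sum.inr _ => True
    | Sum.inr _, Sum.inl _ => False)

/-- The graph H_{t,n-t}. -/
def HGraph (n t : ℕ) : SimpleGraph (Fin n ⊕ Fin n) :=
  SimpleGraph.fromRel (fun x y =>
    match x, y with
    | Sum.inl i, Sum.inr j => (j : ℕ) < n - t ∨ (i : ℕ) < t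
    | _, _ => False)

/-- Hamilton-connected. -/
def IsHamiltonianConnected {V : Type*} [DecidableEq V] (G : SimpleGraph V) : Prop :=
  ∀ u v : V, u ≠ v → ∃ p : G.Walk u v, p.IsHamiltonian

/-- Traceable from every vertex. -/
def TraceableFromEveryVertex {V : Type*} [DecidableEq V] (G : SimpleGraph V) : Prop :=
  ∀ u : V, ∃ v : V, ∃ p : G.Walk u v, p.IsHamiltonian

/-- K_{n-1} + e : complete graph on n-1 vertices with a pendant edge. -/
def KPlusPendant (n : ℕ) : SimpleGraph (Fin (n - 1) ⊕ Fin 1) :=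
  SimpleGraph.fromRel (fun x y =>
    match x, y with
    | Sum.inl a, Sum.inl b => a ≠ b
    | Sum.inl a, Sum.inr _ => (a : ℕ) = 0
    | _, _ => False)

open Matrix

theorem Matrix.IsHermitian.dotProduct_mulVec_le {n : Type*} [Fintype n] [DecidableEq n]
    {A : Matrix n n ℝ} (hA : A.IsHermitian) {ρ : ℝ} (hρ : ∀ μ ∈ spectrum ℝ A, μ ≤ ρ)
    (x : n → ℝ) : x ⬝ᵥ (A *ᵥ x) ≤ ρ * (x ⬝ᵥ x) := by
  -- `ρ - A` has spectrum `ρ - σ(A) ⊆ [0, ∞)`, so it is positive semidefinite.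
  set B : Matrix n n ℝ := algebraMap ℝ _ ρ - A
  have hB : B.IsHermitian := (isHermitian_diagonal _).sub hA
  have hBpsd : B.PosSemidef := hB.posSemidef_iff_eigenvalues_nonneg.2 fun i => by
    have hi := hB.eigenvalues_mem_spectrum_real i
    rw [← spectrum.singleton_sub_eq] at hi
    obtain ⟨_, rfl, μ, hμ, hμi⟩ := hi
    simpa [← hμi] using hρ μ hμ
  simpa only [B, star_trivial, sub_mulVec, dotProduct_sub, algebraMap_eq_diagonal,
    Pi.algebraMap_def, Algebra.algebraMap_self, RingHom.id_apply, diagonal_const_mulVec,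
    dotProduct_smul, smul_eq_mul, sub_nonneg] using hBpsd.dotProduct_mulVec_nonneg x

section

variable {V : Type*} [Fintype V] [DecidableEq V] {G : SimpleGraph V}

variable (G) in
theorem distSignlessLaplacian_isHermitian :
    (distSignlessLaplacian G).IsHermitian := by
  ext u v
  by_cases h : u = v
  · subst h; rfl
  · simp [distSignlessLaplacian, h, Ne.symm h, SimpleGraph.dist_comm]

variable (G) in
theorem one_dotProduct_distSignlessLaplacian_mulVec_one :
    (1 : V → ℝ) ⬝ᵥ (distSignlessLaplacian G *ᵥ 1) = 2 * ∑ u, (transmission G u : ℝ) := by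
  simp only [dotProduct, Pi.one_apply, mulVec, distSignlessLaplacian, transmission, Nat.cast_sum,
    mul_one, one_mul, sum_add_distrib, sum_ite_eq, mem_univ, if_true]
  ring

theorem SimpleGraph.Connected.two_mul_card_le_transmission_add_degree_add_two (hG : G.Connected)
    [DecidableRel G.Adj] (u : V) :
    2 * Fintype.card V ≤ transmission G u + G.degree u + 2 := by
  have key : ∑ _v : V, 2 ≤
      ∑ v, ((G.dist u v + if G.Adj u v then 1 else 0) + if u = v then 2 else 0) :=
    Finset.sum_le_sum fun v _ => by
      by_cases huv : u = v
      · simp [huv]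
      by_cases hadj : G.Adj u v
      · simp [hadj, huv, SimpleGraph.dist_eq_one_iff_adj.mpr hadj]
      · have := hG.one_lt_dist_of_ne_of_not_adj huv hadj
        simp only [hadj, huv, if_false]
        omega
  simpa [Finset.sum_add_distrib, ← SimpleGraph.neighborFinset_eq_filter, transmission, mul_comm]
    using key

theorem IsDistSLSpectralRadius.two_mul_sum_transmission_le {ρ : ℝ}
    (hρ : IsDistSLSpectralRadius G ρ) :
    2 * ∑ u, (transmission G u : ℝ) ≤ Fintype.card V * ρ := by
  have hspec : ∀ μ ∈ spectrum ℝ (distSignlessLaplacian G), μ ≤ ρ := fun μ hμ =>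
    hρ.2 (Module.End.hasEigenvalue_iff_mem_spectrum.2 (by rwa [Matrix.spectrum_toLin']))
  simpa [one_dotProduct_distSignlessLaplacian_mulVec_one, mul_comm] using
    (distSignlessLaplacian_isHermitian G).dotProduct_mulVec_le hspec 1

theorem IsDistSLSpectralRadius.four_mul_le_card_mul [DecidableRel G.Adj] {ρ : ℝ}
    (hρ : IsDistSLSpectralRadius G ρ) (hG : G.Connected) :
    4 * ((Fintype.card V : ℝ) * (Fintype.card V - 1) - #G.edgeFinset) ≤ Fintype.card V * ρ := by
  have hsum : ∑ _u : V, 2 * Fintype.card V ≤ ∑ u, (transmission G u + G.degree u + 2) :=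
    Finset.sum_le_sum fun u _ => hG.two_mul_card_le_transmission_add_degree_add_two u
  simp only [Finset.sum_add_distrib, G.sum_degrees_eq_twice_card_edges, Finset.sum_const,
    Finset.card_univ, smul_eq_mul] at hsum
  have hsumℝ : (Fintype.card V * (2 * Fintype.card V) : ℝ) ≤
      ∑ u, (transmission G u : ℝ) + 2 * #G.edgeFinset + Fintype.card V * 2 := by
    exact_mod_cast hsum
  linarith [hρ.two_mul_sum_transmission_le]

end

theorem stmt_3_general {V : Type*} [Fintype V] [DecidableEq V] (G : SimpleGraph V) [DecidableRel G.Adj]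
    (hconn : G.Connected)
    (n t : ℕ) (hnt : 2 * t ≤ n)
    (X Y : Finset V) (hX : X.card = n) (hY : Y.card = n)
    (hdisj : Disjoint X Y) (hcover : X ∪ Y = Finset.univ)
    (ρ : ℝ) (hρ : IsDistSLSpectralRadius G ρ)
    (hle : ρ ≤ (G.edgeFinset.card : ℝ) - (n : ℝ) ^ 2 + ((t : ℝ) + 6) * n - ((t : ℝ) ^ 2 + 4)) :
    (n : ℝ) ^ 2 - (t : ℝ) * n + (t : ℝ) ^ 2 ≤ (G.edgeFinset.card : ℝ) := by
  have hcard : Fintype.card V = 2 * n := by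
    rw [← Finset.card_univ, ← hcover, Finset.card_union_of_disjoint hdisj, hX, hY, two_mul]
  have hlower := hρ.four_mul_le_card_mul hconn
  rw [hcard] at hlower
  push_cast at hlower
  by_contra! hfew
  have hfew' : (#G.edgeFinset : ℝ) + 1 ≤ (n : ℝ) ^ 2 - t * n + t ^ 2 := by
    have : (#G.edgeFinset : ℤ) < (n : ℤ) ^ 2 - t * n + t ^ 2 := by exact_mod_cast hfew
    exact_mod_cast this
  have htn : (t : ℝ) ≤ n := by exact_mod_cast (by omega : t ≤ n)
  linarith [mul_le_mul_of_nonneg_left hle (by positivity : (0 : ℝ) ≤ 2 * n),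
    mul_le_mul_of_nonneg_left hfew' (by positivity : (0 : ℝ) ≤ 2 * n + 4),
    mul_nonneg (Nat.cast_nonneg t : (0 : ℝ) ≤ t) (sub_nonneg.2 htn)]

/-- If ρ_D(G) ≤ m - n² + (t+6)n - (t²+4) for a connected balanced bipartite graph,
then m ≥ n² - tn + t². -/
theorem stmt_3 {V : Type*} [Fintype V] [DecidableEq V] (G : SimpleGraph V) [DecidableRel G.Adj]
    (hconn : G.Connected)
    (n t : ℕ) (ht : 1 ≤ t) (hnt : 2 * t ≤ n)
    (X Y : Finset V) (hX : X.card = n) (hY : Y.card = n)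
    (hdisj : Disjoint X Y) (hcover : X ∪ Y = Finset.univ)
    (hbip : ∀ u v : V, G.Adj u v → (u ∈ X ∧ v ∈ Y) ∨ (u ∈ Y ∧ v ∈ X))
    (ρ : ℝ) (hρ : IsDistSLSpectralRadius G ρ)
    (hle : ρ ≤ (G.edgeFinset.card : ℝ) - (n : ℝ) ^ 2 + ((t : ℝ) + 6) * n - ((t : ℝ) ^ 2 + 4)) :
    (n : ℝ) ^ 2 - (t : ℝ) * n + (t : ℝ) ^ 2 ≤ (G.edgeFinset.card : ℝ) :=
  stmt_3_general G hconn n t hnt X Y hX hY hdisj hcover ρ hρ hle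
end

section
/- Let n ≥ 5 and G = K₂ ∨ (K_{n−4} + 2K₁). Then ρ_D(G) is the largest real root of the equation ρ³ − (5n−6)ρ² + (8n² − 28n + 44)ρ − 4n³ + 24n² − 68n + 64 = 0. -/
open SimpleGraph Finset

abbrev Vt (n : ℕ) := Fin 2 ⊕ (Fin (n-4) ⊕ Fin 2)

def Gr (n : ℕ) : SimpleGraph (Vt n) :=
  joinGraph (⊤ : SimpleGraph (Fin 2)) ((⊤ : SimpleGraph (Fin (n - 4))) ⊕g (⊥ : SimpleGraph (Fin 2)))

def adjP (n : ℕ) : Vt n → Vt n → Prop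
  | Sum.inl i, Sum.inl j => i ≠ j
  | Sum.inl _, Sum.inr _ => True
  | Sum.inr _, Sum.inl _ => True
  | Sum.inr (Sum.inl a), Sum.inr (Sum.inl b) => a ≠ b
  | _, _ => False

lemma adj_iff (n : ℕ) (u v : Vt n) : (Gr n).Adj u v ↔ adjP n u v := by
  rcases u with i | (a | y) <;> rcases v with j | (b | z) <;>
    simp [Gr, joinGraph, SimpleGraph.fromRel_adj, adjP, ne_comm]

def dF (n : ℕ) : Vt n → Vt n → ℕ
  | Sum.inl i, Sum.inl j => if i = j then 0 else 1
  | Sum.inl _, Sum.inr _ => 1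
  | Sum.inr _, Sum.inl _ => 1
  | Sum.inr (Sum.inl a), Sum.inr (Sum.inl b) => if a = b then 0 else 1
  | Sum.inr (Sum.inl _), Sum.inr (Sum.inr _) => 2
  | Sum.inr (Sum.inr _), Sum.inr (Sum.inl _) => 2
  | Sum.inr (Sum.inr a), Sum.inr (Sum.inr b) => if a = b then 0 else 2

lemma dist_two {n : ℕ} {u v : Vt n} (hne : u ≠ v) (hna : ¬ (Gr n).Adj u v)
    (h1 : (Gr n).Adj u (Sum.inl 0)) (h2 : (Gr n).Adj (Sum.inl 0) v) :
    (Gr n).dist u v = 2 := by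
  have p : (Gr n).Walk u v := SimpleGraph.Walk.cons h1 (SimpleGraph.Walk.cons h2 SimpleGraph.Walk.nil)
  have hle : (Gr n).dist u v ≤ 2 := by
    have h := SimpleGraph.dist_le
      (SimpleGraph.Walk.cons h1 (SimpleGraph.Walk.cons h2 SimpleGraph.Walk.nil))
    simp only [SimpleGraph.Walk.length_cons, SimpleGraph.Walk.length_nil] at h
    omega
  have h0 : 0 < (Gr n).dist u v := SimpleGraph.Reachable.pos_dist_of_ne ⟨p⟩ hne
  have h1' : (Gr n).dist u v ≠ 1 := fun h => hna (SimpleGraph.dist_eq_one_iff_adj.mp h)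
  omega

lemma dist_eq (n : ℕ) (u v : Vt n) : (Gr n).dist u v = dF n u v := by
  rcases u with i | (a | y) <;> rcases v with j | (b | z)
  · rcases eq_or_ne i j with h | h
    · simp [dF, h]
    · rw [SimpleGraph.dist_eq_one_iff_adj.mpr ((adj_iff n _ _).mpr (by simp [adjP, h]))]
      simp [dF, h]
  · rw [SimpleGraph.dist_eq_one_iff_adj.mpr ((adj_iff n _ _).mpr (by simp [adjP]))]; simp [dF]
  · rw [SimpleGraph.dist_eq_one_iff_adj.mpr ((adj_iff n _ _).mpr (by simp [adjP]))]; simp [dF]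
  · rw [SimpleGraph.dist_eq_one_iff_adj.mpr ((adj_iff n _ _).mpr (by simp [adjP]))]; simp [dF]
  · rcases eq_or_ne a b with h | h
    · simp [dF, h]
    · rw [SimpleGraph.dist_eq_one_iff_adj.mpr ((adj_iff n _ _).mpr (by simp [adjP, h]))]
      simp [dF, h]
  · rw [dist_two (by simp) (by rw [adj_iff]; simp [adjP]) ((adj_iff n _ _).mpr (by simp [adjP]))
      ((adj_iff n _ _).mpr (by simp [adjP]))]
    simp [dF]
  · rw [SimpleGraph.dist_eq_one_iff_adj.mpr ((adj_iff n _ _).mpr (by simp [adjP]))]; simp [dF]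
  · rw [dist_two (by simp) (by rw [adj_iff]; simp [adjP]) ((adj_iff n _ _).mpr (by simp [adjP]))
      ((adj_iff n _ _).mpr (by simp [adjP]))]
    simp [dF]
  · rcases eq_or_ne y z with h | h
    · simp [dF, h]
    · rw [dist_two (by simp [h]) (by rw [adj_iff]; simp [adjP]) ((adj_iff n _ _).mpr (by simp [adjP]))
        ((adj_iff n _ _).mpr (by simp [adjP]))]
      simp [dF, h]

lemma sum_ite_ne_nat {α : Type*} [Fintype α] [DecidableEq α] (a : α) :
    ∑ b : α, (if a = b then 0 else 1) = Fintype.card α - 1 := by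
  rw [← Finset.add_sum_erase _ _ (Finset.mem_univ a), if_pos rfl, zero_add,
    Finset.sum_congr rfl (fun b hb => if_neg (Ne.symm (Finset.ne_of_mem_erase hb))),
    Finset.sum_const, Finset.card_erase_of_mem (Finset.mem_univ a), Finset.card_univ]
  simp

lemma trans_A (n : ℕ) (hn : 5 ≤ n) (i : Fin 2) :
    transmission (Gr n) (Sum.inl i) = n - 1 := by
  unfold transmission
  simp only [dist_eq]
  rw [Fintype.sum_sum_type, Fintype.sum_sum_type]
  have h1 : ∑ j : Fin 2, dF n (Sum.inl i) (Sum.inl j) = 1 := by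
    show ∑ j : Fin 2, (if i = j then 0 else 1) = 1
    rw [sum_ite_ne_nat]; simp
  rw [h1]
  have h2 : ∑ a : Fin (n-4), dF n (Sum.inl i) (Sum.inr (Sum.inl a)) = n - 4 := by
    show ∑ _a : Fin (n-4), 1 = n - 4
    simp
  have h3 : ∑ y : Fin 2, dF n (Sum.inl i) (Sum.inr (Sum.inr y)) = 2 := by
    show ∑ _y : Fin 2, 1 = 2
    simp
  rw [h2, h3]; omega

lemma trans_B (n : ℕ) (hn : 5 ≤ n) (a : Fin (n-4)) :
    transmission (Gr n) (Sum.inr (Sum.inl a)) = n + 1 := by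
  unfold transmission
  simp only [dist_eq]
  rw [Fintype.sum_sum_type, Fintype.sum_sum_type]
  have h1 : ∑ j : Fin 2, dF n (Sum.inr (Sum.inl a)) (Sum.inl j) = 2 := by
    show ∑ _j : Fin 2, 1 = 2
    simp
  have h2 : ∑ b : Fin (n-4), dF n (Sum.inr (Sum.inl a)) (Sum.inr (Sum.inl b)) = n - 4 - 1 := by
    show ∑ b : Fin (n-4), (if a = b then 0 else 1) = n - 4 - 1
    rw [sum_ite_ne_nat]; simp
  have h3 : ∑ y : Fin 2, dF n (Sum.inr (Sum.inl a)) (Sum.inr (Sum.inr y)) = 4 := by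
    show ∑ _y : Fin 2, 2 = 4
    simp
  rw [h1, h2, h3]; omega

lemma trans_C (n : ℕ) (hn : 5 ≤ n) (y : Fin 2) :
    transmission (Gr n) (Sum.inr (Sum.inr y)) = 2 * n - 4 := by
  unfold transmission
  simp only [dist_eq]
  rw [Fintype.sum_sum_type, Fintype.sum_sum_type]
  have h1 : ∑ j : Fin 2, dF n (Sum.inr (Sum.inr y)) (Sum.inl j) = 2 := by
    show ∑ _j : Fin 2, 1 = 2
    simp
  have h2 : ∑ b : Fin (n-4), dF n (Sum.inr (Sum.inr y)) (Sum.inr (Sum.inl b)) = 2 * (n - 4) := by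
    show ∑ _b : Fin (n-4), 2 = 2 * (n - 4)
    simp [mul_comm]
  have h3 : ∑ z : Fin 2, dF n (Sum.inr (Sum.inr y)) (Sum.inr (Sum.inr z)) = 2 := by
    show ∑ z : Fin 2, (if y = z then 0 else 2) = 2
    fin_cases y <;> simp [Fin.sum_univ_two]
  rw [h1, h2, h3]; omega


lemma sum_ite_ne_real {α : Type*} [Fintype α] [DecidableEq α] (a : α) (c : ℝ) (f : α → ℝ) :
    ∑ b : α, (if a = b then 0 else c) * f b = c * (∑ b : α, f b) - c * f a := by
  have h : ∀ b ∈ Finset.univ, (if a = b then (0:ℝ) else c) * f b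
      = c * f b - (if a = b then c * f b else 0) := by
    intro b _; split <;> ring
  rw [Finset.sum_congr rfl h, Finset.sum_sub_distrib, Finset.sum_ite_eq, ← Finset.mul_sum]
  simp

lemma sum_diag_real {α : Type*} [Fintype α] [DecidableEq α] (a : α) (c : ℝ) (f : α → ℝ) :
    ∑ b : α, (if a = b then c else 0) * f b = c * f a := by
  have h : ∀ b ∈ Finset.univ, (if a = b then c else (0:ℝ)) * f b
      = (if a = b then c * f b else 0) := by
    intro b _; split <;> ring
  rw [Finset.sum_congr rfl h, Finset.sum_ite_eq]
  simp

section MulVec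
variable (n : ℕ) (w : Vt n → ℝ)

noncomputable def sA : ℝ := ∑ i : Fin 2, w (Sum.inl i)
noncomputable def sB : ℝ := ∑ a : Fin (n-4), w (Sum.inr (Sum.inl a))
noncomputable def sC : ℝ := ∑ y : Fin 2, w (Sum.inr (Sum.inr y))

lemma mulVec_eq (u : Vt n) :
    (distSignlessLaplacian (Gr n)).mulVec w u
      = (transmission (Gr n) u : ℝ) * w u + ∑ v, (dF n u v : ℝ) * w v := by
  unfold Matrix.mulVec dotProduct distSignlessLaplacian
  show (∑ v, ((if u = v then (transmission (Gr n) u : ℝ) else 0) + ((Gr n).dist u v : ℝ)) * w v) = _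
  have h : ∀ v ∈ Finset.univ, ((if u = v then (transmission (Gr n) u : ℝ) else 0)
      + ((Gr n).dist u v : ℝ)) * w v
      = (if u = v then (transmission (Gr n) u : ℝ) else 0) * w v + ((dF n u v : ℝ)) * w v := by
    intro v _; rw [dist_eq]; ring
  rw [Finset.sum_congr rfl h, Finset.sum_add_distrib, sum_diag_real]

lemma mulVec_A (hn : 5 ≤ n) (i : Fin 2) :
    (distSignlessLaplacian (Gr n)).mulVec w (Sum.inl i)
      = ((n:ℝ) - 1) * w (Sum.inl i) + (sA n w + sB n w + sC n w - w (Sum.inl i)) := by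
  rw [mulVec_eq, trans_A n hn i]
  have hc : ((n - 1 : ℕ) : ℝ) = (n:ℝ) - 1 := by
    rw [Nat.cast_sub (by omega)]; simp
  rw [hc]
  congr 1
  rw [Fintype.sum_sum_type, Fintype.sum_sum_type]
  have h1 : ∑ j : Fin 2, ((dF n (Sum.inl i) (Sum.inl j) : ℝ)) * w (Sum.inl j)
      = sA n w - w (Sum.inl i) := by
    have : ∀ j, ((dF n (Sum.inl i) (Sum.inl j) : ℝ)) = (if i = j then 0 else 1) := by
      intro j; show (((if i = j then 0 else 1 : ℕ)) : ℝ) = _; split <;> simp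
    rw [Finset.sum_congr rfl (fun j _ => by rw [this j]), sum_ite_ne_real]
    simp [sA]
  have h2 : ∑ a : Fin (n-4), ((dF n (Sum.inl i) (Sum.inr (Sum.inl a)) : ℝ)) * w (Sum.inr (Sum.inl a))
      = sB n w := by
    simp [sB, dF]
  have h3 : ∑ y : Fin 2, ((dF n (Sum.inl i) (Sum.inr (Sum.inr y)) : ℝ)) * w (Sum.inr (Sum.inr y))
      = sC n w := by
    simp [sC, dF]
  rw [h1, h2, h3]; ring

lemma mulVec_B (hn : 5 ≤ n) (a : Fin (n-4)) :
    (distSignlessLaplacian (Gr n)).mulVec w (Sum.inr (Sum.inl a))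
      = ((n:ℝ) + 1) * w (Sum.inr (Sum.inl a))
        + (sA n w + (sB n w - w (Sum.inr (Sum.inl a))) + 2 * sC n w) := by
  rw [mulVec_eq, trans_B n hn a]
  push_cast
  congr 1
  rw [Fintype.sum_sum_type, Fintype.sum_sum_type]
  have h1 : ∑ j : Fin 2, ((dF n (Sum.inr (Sum.inl a)) (Sum.inl j) : ℝ)) * w (Sum.inl j)
      = sA n w := by
    simp [sA, dF]
  have h2 : ∑ b : Fin (n-4), ((dF n (Sum.inr (Sum.inl a)) (Sum.inr (Sum.inl b)) : ℝ))
        * w (Sum.inr (Sum.inl b)) = sB n w - w (Sum.inr (Sum.inl a)) := by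
    have : ∀ b, ((dF n (Sum.inr (Sum.inl a)) (Sum.inr (Sum.inl b)) : ℝ))
        = (if a = b then 0 else 1) := by
      intro b; show (((if a = b then 0 else 1 : ℕ)) : ℝ) = _; split <;> simp
    rw [Finset.sum_congr rfl (fun b _ => by rw [this b]), sum_ite_ne_real]
    simp [sB]
  have h3 : ∑ y : Fin 2, ((dF n (Sum.inr (Sum.inl a)) (Sum.inr (Sum.inr y)) : ℝ))
        * w (Sum.inr (Sum.inr y)) = 2 * sC n w := by
    simp [sC, dF, Finset.mul_sum, Fin.sum_univ_two]; ring
  rw [h1, h2, h3]; ring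

lemma mulVec_C (hn : 5 ≤ n) (y : Fin 2) :
    (distSignlessLaplacian (Gr n)).mulVec w (Sum.inr (Sum.inr y))
      = (2 * (n:ℝ) - 4) * w (Sum.inr (Sum.inr y))
        + (sA n w + 2 * sB n w + 2 * (sC n w - w (Sum.inr (Sum.inr y)))) := by
  rw [mulVec_eq, trans_C n hn y]
  have hc : ((2 * n - 4 : ℕ) : ℝ) = 2 * (n:ℝ) - 4 := by
    rw [Nat.cast_sub (by omega)]; push_cast; ring
  rw [hc]
  congr 1
  rw [Fintype.sum_sum_type, Fintype.sum_sum_type]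
  have h1 : ∑ j : Fin 2, ((dF n (Sum.inr (Sum.inr y)) (Sum.inl j) : ℝ)) * w (Sum.inl j)
      = sA n w := by
    simp [sA, dF]
  have h2 : ∑ b : Fin (n-4), ((dF n (Sum.inr (Sum.inr y)) (Sum.inr (Sum.inl b)) : ℝ))
        * w (Sum.inr (Sum.inl b)) = 2 * sB n w := by
    simp [sB, dF, Finset.mul_sum]
  have h3 : ∑ z : Fin 2, ((dF n (Sum.inr (Sum.inr y)) (Sum.inr (Sum.inr z)) : ℝ))
        * w (Sum.inr (Sum.inr z)) = 2 * (sC n w - w (Sum.inr (Sum.inr y))) := by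
    have : ∀ z, ((dF n (Sum.inr (Sum.inr y)) (Sum.inr (Sum.inr z)) : ℝ))
        = (if y = z then 0 else 2) := by
      intro z; show (((if y = z then 0 else 2 : ℕ)) : ℝ) = _; split <;> simp
    rw [Finset.sum_congr rfl (fun z _ => by rw [this z]), sum_ite_ne_real]
    simp [sC]; ring
  rw [h1, h2, h3]; ring

end MulVec

lemma hasEig_iff (n : ℕ) (μ : ℝ) :
    Module.End.HasEigenvalue (Matrix.toLin' (distSignlessLaplacian (Gr n))) μ
      ↔ ∃ w : Vt n → ℝ, w ≠ 0 ∧ (distSignlessLaplacian (Gr n)).mulVec w = μ • w := by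
  constructor
  · intro h
    obtain ⟨v, hv⟩ := h.exists_hasEigenvector
    exact ⟨v, hv.2, by
      have := Module.End.mem_eigenspace_iff.mp hv.1
      rwa [Matrix.toLin'_apply] at this⟩
  · rintro ⟨w, hw0, hw⟩
    exact Module.End.hasEigenvalue_of_hasEigenvector
      ⟨Module.End.mem_eigenspace_iff.mpr (by rw [Matrix.toLin'_apply]; exact hw), hw0⟩

noncomputable def cubic (n : ℕ) (x : ℝ) : ℝ :=
  x ^ 3 - (5 * (n : ℝ) - 6) * x ^ 2 + (8 * (n : ℝ) ^ 2 - 28 * (n : ℝ) + 44) * x -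
      4 * (n : ℝ) ^ 3 + 24 * (n : ℝ) ^ 2 - 68 * (n : ℝ) + 64

lemma cast_sub4 (n : ℕ) (hn : 5 ≤ n) : ((n - 4 : ℕ) : ℝ) = (n : ℝ) - 4 := by
  rw [Nat.cast_sub (by omega)]; simp

lemma root_is_eig (n : ℕ) (hn : 5 ≤ n) (x : ℝ) (hx : cubic n x = 0) :
    Module.End.HasEigenvalue (Matrix.toLin' (distSignlessLaplacian (Gr n))) x := by
  set N : ℝ := (n : ℝ) with hN
  set M : Matrix (Fin 3) (Fin 3) ℝ :=
    ![![x - N, -(N-4), -2], ![-2, x-(2*N-4), -4], ![-2, -(2*N-8), x-(2*N-2)]] with hM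
  have hdet : M.det = 0 := by
    rw [Matrix.det_fin_three]
    simp only [hM, Matrix.cons_val', Matrix.cons_val_zero, Matrix.cons_val_one,
      Matrix.head_cons, Matrix.head_fin_const, Matrix.empty_val',
      Matrix.cons_val_fin_one, Matrix.cons_val_two, Matrix.tail_cons]
    unfold cubic at hx
    linear_combination hx
  obtain ⟨v, hv0, hveq⟩ := (Matrix.exists_mulVec_eq_zero_iff).mpr hdet
  set a := v 0 with ha; set b := v 1 with hb; set c := v 2 with hc
  have e0 : (x - N) * a + (-(N-4)) * b + (-2) * c = 0 := by
    have := congrFun hveq 0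
    simpa [Matrix.mulVec, dotProduct, Fin.sum_univ_three, hM] using this
  have e1 : (-2) * a + (x-(2*N-4)) * b + (-4) * c = 0 := by
    have := congrFun hveq 1
    simpa [Matrix.mulVec, dotProduct, Fin.sum_univ_three, hM] using this
  have e2 : (-2) * a + (-(2*N-8)) * b + (x-(2*N-2)) * c = 0 := by
    have := congrFun hveq 2
    simpa [Matrix.mulVec, dotProduct, Fin.sum_univ_three, hM] using this
  set w : Vt n → ℝ := Sum.elim (fun _ => a) (Sum.elim (fun _ => b) (fun _ => c)) with hw
  have hsA : sA n w = 2 * a := by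
    rw [sA, Fin.sum_univ_two]
    show a + a = 2 * a; ring
  have hsB : sB n w = (N - 4) * b := by
    show (∑ _x : Fin (n-4), b) = (N - 4) * b
    rw [Finset.sum_const, Finset.card_univ, Fintype.card_fin, nsmul_eq_mul, cast_sub4 n hn]
  have hsC : sC n w = 2 * c := by
    rw [sC, Fin.sum_univ_two]
    show c + c = 2 * c; ring
  rw [hasEig_iff]
  refine ⟨w, ?_, ?_⟩
  · intro hzero
    apply hv0
    funext i
    fin_cases i
    · exact congrFun hzero (Sum.inl 0)
    · exact congrFun hzero (Sum.inr (Sum.inl ⟨0, by omega⟩))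
    · exact congrFun hzero (Sum.inr (Sum.inr 0))
  · funext u
    rcases u with i | (d | y)
    · rw [mulVec_A n w hn i]
      show _ = x * w (Sum.inl i)
      have : w (Sum.inl i) = a := rfl
      rw [this, hsA, hsB, hsC]
      linear_combination -e0
    · rw [mulVec_B n w hn d]
      show _ = x * w (Sum.inr (Sum.inl d))
      have : w (Sum.inr (Sum.inl d)) = b := rfl
      rw [this, hsA, hsB, hsC]
      linear_combination -e1
    · rw [mulVec_C n w hn y]
      show _ = x * w (Sum.inr (Sum.inr y))
      have : w (Sum.inr (Sum.inr y)) = c := rfl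
      rw [this, hsA, hsB, hsC]
      linear_combination -e2

lemma exists_big_root (n : ℕ) (hn : 5 ≤ n) :
    ∃ r : ℝ, cubic n r = 0 ∧ 2 * (n:ℝ) - 4 < r := by
  have hN : (5:ℝ) ≤ (n:ℝ) := by exact_mod_cast hn
  have hcont : Continuous (cubic n) := by unfold cubic; fun_prop
  have hab : 2*(n:ℝ)-4 ≤ 5*(n:ℝ) := by linarith
  have h1 : cubic n (2*(n:ℝ)-4) < 0 := by unfold cubic; nlinarith [sq_nonneg ((n:ℝ)-5)]
  have h2 : 0 < cubic n (5*(n:ℝ)) := by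
    have h0 : (0:ℝ) < (n:ℝ) := by linarith
    unfold cubic
    nlinarith [mul_pos (mul_pos h0 h0) h0, mul_pos h0 h0]
  obtain ⟨r, hr, hfr⟩ := intermediate_value_Icc hab hcont.continuousOn
    (Set.mem_Icc.mpr ⟨h1.le, h2.le⟩)
  refine ⟨r, hfr, lt_of_le_of_ne hr.1 (fun h => ?_)⟩
  rw [← h] at hfr
  exact absurd hfr h1.ne

theorem main (n : ℕ) (hn : 5 ≤ n) (ρ : ℝ)
    (hρ : IsGreatest {μ : ℝ | Module.End.HasEigenvalue
      (Matrix.toLin' (distSignlessLaplacian (Gr n))) μ} ρ) :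
    IsGreatest {x : ℝ | cubic n x = 0} ρ := by
  have hN : (5:ℝ) ≤ (n:ℝ) := by exact_mod_cast hn
  set N : ℝ := (n:ℝ) with hNdef
  constructor
  · -- ρ is a root of the cubic
    obtain ⟨w, hw0, hweq⟩ := (hasEig_iff n ρ).mp hρ.1
    set A := sA n w with hAdef
    set B := sB n w with hBdef
    set C := sC n w with hCdef
    have hw' : ∀ u, (distSignlessLaplacian (Gr n)).mulVec w u = ρ * w u := by
      intro u; have := congrFun hweq u; exact this
    have hA : ∀ i : Fin 2, (N - 1) * w (Sum.inl i) + (A + B + C - w (Sum.inl i))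
        = ρ * w (Sum.inl i) := fun i => (mulVec_A n w hn i).symm.trans (hw' _)
    have hB : ∀ d : Fin (n-4), N * w (Sum.inr (Sum.inl d)) + (A + B + 2*C)
        = ρ * w (Sum.inr (Sum.inl d)) := by
      intro d
      have := (mulVec_B n w hn d).symm.trans (hw' _)
      linear_combination this
    have hC : ∀ y : Fin 2, (2*N - 6) * w (Sum.inr (Sum.inr y)) + (A + 2*B + 2*C)
        = ρ * w (Sum.inr (Sum.inr y)) := by
      intro y
      have := (mulVec_C n w hn y).symm.trans (hw' _)
      linear_combination this
    have hAe : A = w (Sum.inl 0) + w (Sum.inl 1) := by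
      rw [hAdef, sA, Fin.sum_univ_two]
    have hCe : C = w (Sum.inr (Sum.inr 0)) + w (Sum.inr (Sum.inr 1)) := by
      rw [hCdef, sC, Fin.sum_univ_two]
    have hBe : ∑ d : Fin (n-4), w (Sum.inr (Sum.inl d)) = B := rfl
    have eA : N*A + 2*B + 2*C = ρ*A := by
      linear_combination hA 0 + hA 1 + (N - 2 - ρ) * hAe
    have eC : 2*A + 4*B + (2*N-2)*C = ρ*C := by
      linear_combination hC 0 + hC 1 + (2*N - 6 - ρ) * hCe
    have eB : (N-4)*A + (2*N-4)*B + (2*N-8)*C = ρ*B := by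
      have h2 := Finset.sum_congr rfl (fun d (_ : d ∈ Finset.univ) => hB d)
      rw [Finset.sum_add_distrib, ← Finset.mul_sum, ← Finset.mul_sum, Finset.sum_const,
        Finset.card_univ, Fintype.card_fin, nsmul_eq_mul, cast_sub4 n hn, hBe] at h2
      linear_combination h2
    by_cases hS : A = 0 ∧ B = 0 ∧ C = 0
    · exfalso
      obtain ⟨hA0, hB0, hC0⟩ := hS
      obtain ⟨r, hr0, hrgt⟩ := exists_big_root n hn
      have hrle : r ≤ ρ := hρ.2 (root_is_eig n hn r hr0)
      obtain ⟨u, hu⟩ := Function.ne_iff.mp hw0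
      have hu' : w u ≠ 0 := hu
      rcases u with i | (d | y)
      · have := hA i
        rw [hA0, hB0, hC0] at this
        have : (N - 2) * w (Sum.inl i) = ρ * w (Sum.inl i) := by linear_combination this
        have hρeq : N - 2 = ρ := mul_right_cancel₀ hu' this
        linarith
      · have := hB d
        rw [hA0, hB0, hC0] at this
        have : N * w (Sum.inr (Sum.inl d)) = ρ * w (Sum.inr (Sum.inl d)) := by
          linear_combination this
        have hρeq : N = ρ := mul_right_cancel₀ hu' this
        linarith
      · have := hC y
        rw [hA0, hB0, hC0] at this
        have : (2*N - 6) * w (Sum.inr (Sum.inr y)) = ρ * w (Sum.inr (Sum.inr y)) := by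
          linear_combination this
        have hρeq : 2*N - 6 = ρ := mul_right_cancel₀ hu' this
        linarith
    · set s : Fin 3 → ℝ := ![A, B, C] with hsdef
      have hs0 : s ≠ 0 := by
        intro h
        apply hS
        refine ⟨?_, ?_, ?_⟩
        · have := congrFun h 0; simpa [hsdef] using this
        · have := congrFun h 1; simpa [hsdef] using this
        · have := congrFun h 2; simpa [hsdef] using this
      set M : Matrix (Fin 3) (Fin 3) ℝ :=
        ![![ρ - N, -2, -2], ![-(N-4), ρ-(2*N-4), -(2*N-8)], ![-2, -4, ρ-(2*N-2)]] with hMdef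
      have hMs : M.mulVec s = 0 := by
        funext j
        fin_cases j
        · show (∑ k, M 0 k * s k) = 0
          simp only [hMdef, hsdef, Fin.sum_univ_three, Matrix.cons_val', Matrix.cons_val_zero,
            Matrix.cons_val_one, Matrix.head_cons, Matrix.cons_val_two, Matrix.tail_cons,
            Matrix.empty_val', Matrix.cons_val_fin_one, Matrix.head_fin_const]
          linear_combination -eA
        · show (∑ k, M 1 k * s k) = 0
          simp only [hMdef, hsdef, Fin.sum_univ_three, Matrix.cons_val', Matrix.cons_val_zero,
            Matrix.cons_val_one, Matrix.head_cons, Matrix.cons_val_two, Matrix.tail_cons,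
            Matrix.empty_val', Matrix.cons_val_fin_one, Matrix.head_fin_const]
          linear_combination -eB
        · show (∑ k, M 2 k * s k) = 0
          simp only [hMdef, hsdef, Fin.sum_univ_three, Matrix.cons_val', Matrix.cons_val_zero,
            Matrix.cons_val_one, Matrix.head_cons, Matrix.cons_val_two, Matrix.tail_cons,
            Matrix.empty_val', Matrix.cons_val_fin_one, Matrix.head_fin_const]
          linear_combination -eC
      have hdet : M.det = 0 := Matrix.exists_mulVec_eq_zero_iff.mp ⟨s, hs0, hMs⟩
      rw [Matrix.det_fin_three] at hdet
      simp only [hMdef, Matrix.cons_val', Matrix.cons_val_zero, Matrix.cons_val_one,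
        Matrix.head_cons, Matrix.cons_val_two, Matrix.tail_cons, Matrix.empty_val',
        Matrix.cons_val_fin_one, Matrix.head_fin_const] at hdet
      show cubic n ρ = 0
      unfold cubic
      linear_combination hdet
  · intro x hx
    exact hρ.2 (root_is_eig n hn x hx)

/-- For G = K₂ ∨ (K_{n-4} + 2K₁), ρ_D(G) is the largest root of the given cubic. -/
theorem stmt_14 (n : ℕ) (hn : 5 ≤ n) (ρ : ℝ)
    (hρ : IsDistSLSpectralRadius (joinGraph (⊤ : SimpleGraph (Fin 2))
      ((⊤ : SimpleGraph (Fin (n - 4))) ⊕g (⊥ : SimpleGraph (Fin 2)))) ρ) :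
    IsGreatest {x : ℝ | x ^ 3 - (5 * (n : ℝ) - 6) * x ^ 2 +
      (8 * (n : ℝ) ^ 2 - 28 * (n : ℝ) + 44) * x -
      4 * (n : ℝ) ^ 3 + 24 * (n : ℝ) ^ 2 - 68 * (n : ℝ) + 64 = 0} ρ :=
  main n hn ρ hρ
end
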